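/- Fix a real number r with r > 1 and define, for p, q ∈ (0,1) with p·q < 1/r, h(p,q) = log(2p(1−q)) − log( √((1−p)² + 4p(1−q)(1/r − p·q)) − (1−p) ). Then for every p, q ∈ (0,1) with p·q < 1/r, the derivative of the map q ↦ h(p,q) at q is strictly positive. -/

import Mathlib

theorem stmt_11 (r : ℝ) (hr : 1 < r) :
    ∀ p q : ℝ, 0 < p → p < 1 → 0 < q → q < 1 → p * q < 1 / r →
      0 < deriv (fun y : ℝ => Real.log (2 * p * (1 - y)) -
        Real.log (Real.sqrt ((1 - p) ^ 2 + 4 * p * (1 - y) * (1 / r - p * y)) - (1 - p))) q := by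
  intro p q hp hp1 hq hq1 hpq
  set c : ℝ := 1 / r with hc
  have hr0 : (0:ℝ) < r := lt_trans one_pos hr
  have hc0 : 0 < c := by positivity
  have hc1 : c < 1 := by rw [hc, div_lt_one hr0]; exact hr
  have h1q : 0 < 1 - q := by linarith
  have h1p : 0 < 1 - p := by linarith
  have hcpq : 0 < c - p * q := by linarith
  have hgq : 0 < (1 - p) ^ 2 + 4 * p * (1 - q) * (c - p * q) := by positivity
  set S : ℝ := Real.sqrt ((1 - p) ^ 2 + 4 * p * (1 - q) * (c - p * q)) with hSdef
  have hS0 : 0 < S := Real.sqrt_pos.mpr hgq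
  have hS2 : S ^ 2 = (1 - p) ^ 2 + 4 * p * (1 - q) * (c - p * q) := Real.sq_sqrt hgq.le
  have hSgt : 1 - p < S := by
    nlinarith [hS0, hS2, mul_pos (mul_pos hp h1q) hcpq]
  have hL0 : 0 < S - (1 - p) := by linarith
  -- derivative computation
  have hA : HasDerivAt (fun y : ℝ => 1 - y) (-1) q := by
    simpa using (hasDerivAt_id q).const_sub 1
  have hB : HasDerivAt (fun y : ℝ => c - p * y) (-p) q := by
    simpa using ((hasDerivAt_id q).const_mul p).const_sub c
  have hAB : HasDerivAt (fun y : ℝ => (1 - y) * (c - p * y))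
      ((-1) * (c - p * q) + (1 - q) * (-p)) q := hA.mul hB
  have hg : HasDerivAt (fun y : ℝ => (1 - p) ^ 2 + 4 * p * (1 - y) * (c - p * y))
      (4 * p * ((-1) * (c - p * q) + (1 - q) * (-p))) q := by
    have := (hAB.const_mul (4 * p)).const_add ((1 - p) ^ 2)
    have e : (fun y : ℝ => (1 - p) ^ 2 + 4 * p * (1 - y) * (c - p * y)) =
        fun x => (1 - p) ^ 2 + 4 * p * ((1 - x) * (c - p * x)) := by
      funext y
      ring
    rw [e]
    exact this
  have hgqne : (1 - p) ^ 2 + 4 * p * (1 - q) * (c - p * q) ≠ 0 := ne_of_gt hgq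
  have hs : HasDerivAt (fun y : ℝ => Real.sqrt ((1 - p) ^ 2 + 4 * p * (1 - y) * (c - p * y)))
      ((4 * p * ((-1) * (c - p * q) + (1 - q) * (-p))) / (2 * S)) q := hg.sqrt hgqne
  have hsl : HasDerivAt
      (fun y : ℝ => Real.sqrt ((1 - p) ^ 2 + 4 * p * (1 - y) * (c - p * y)) - (1 - p))
      ((4 * p * ((-1) * (c - p * q) + (1 - q) * (-p))) / (2 * S)) q := hs.sub_const (1 - p)
  have hlog2 : HasDerivAt
      (fun y : ℝ => Real.log (Real.sqrt ((1 - p) ^ 2 + 4 * p * (1 - y) * (c - p * y)) - (1 - p)))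
      (((4 * p * ((-1) * (c - p * q) + (1 - q) * (-p))) / (2 * S)) / (S - (1 - p))) q :=
    hsl.log (ne_of_gt hL0)
  have hpos1 : (2 : ℝ) * p * (1 - q) ≠ 0 := by positivity
  have hfirst : HasDerivAt (fun y : ℝ => 2 * p * (1 - y)) (2 * p * (-1)) q :=
    hA.const_mul (2 * p)
  have hlog1 : HasDerivAt (fun y : ℝ => Real.log (2 * p * (1 - y)))
      ((2 * p * (-1)) / (2 * p * (1 - q))) q := hfirst.log hpos1
  have hD : HasDerivAt (fun y : ℝ => Real.log (2 * p * (1 - y)) -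
      Real.log (Real.sqrt ((1 - p) ^ 2 + 4 * p * (1 - y) * (c - p * y)) - (1 - p)))
      ((2 * p * (-1)) / (2 * p * (1 - q)) -
        ((4 * p * ((-1) * (c - p * q) + (1 - q) * (-p))) / (2 * S)) / (S - (1 - p))) q :=
    hlog1.sub hlog2
  rw [hD.deriv]
  -- key inequality
  have hT : (1 - p) * S > (1 - p) ^ 2 + 2 * p * (1 - q) * (c - p) := by
    rcases le_or_gt ((1 - p) ^ 2 + 2 * p * (1 - q) * (c - p)) 0 with hT0 | hT0
    · have : 0 < (1 - p) * S := mul_pos h1p hS0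
      linarith
    · have h2p : 1 + c - 2 * p > 0 := by
        by_contra hcon
        push_neg at hcon
        have hpc0 : 0 < p - c := by linarith
        have h5 : p - c < p * (1 - q) := by nlinarith
        have h6 : (p - c) * (p - c) < p * (1 - q) * (p - c) :=
          mul_lt_mul_of_pos_right h5 hpc0
        nlinarith [sq_nonneg (p - c - (1 - p))]
      have hsq : ((1 - p) ^ 2 + 2 * p * (1 - q) * (c - p)) ^ 2 < ((1 - p) * S) ^ 2 := by
        rw [mul_pow, hS2]
        nlinarith [mul_pos (mul_pos (mul_pos hp h1q) (mul_pos hp h1q))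
          (mul_pos (show (0:ℝ) < 1 - c by linarith) h2p)]
      exact lt_of_pow_lt_pow_left₀ 2 (by positivity) hsq
  have hkey : S * (S - (1 - p)) < 2 * p * (1 - q) * (c + p - 2 * p * q) := by
    have h7 : S * (S - (1 - p)) =
        ((1 - p) ^ 2 + 4 * p * (1 - q) * (c - p * q)) - (1 - p) * S := by
      rw [← hS2]; ring
    rw [h7]
    nlinarith
  -- final arithmetic
  have e1 : (2 * p * (-1)) / (2 * p * (1 - q)) = -(1 / (1 - q)) := by
    field_simp
  have e2 : ((4 * p * ((-1) * (c - p * q) + (1 - q) * (-p))) / (2 * S)) / (S - (1 - p)) =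
      (-(4 * p * (c + p - 2 * p * q))) / (2 * S * (S - (1 - p))) := by
    rw [div_div]
    congr 1
    ring
  rw [e1, e2, neg_div]
  have hSL : 0 < 2 * S * (S - (1 - p)) := by positivity
  have hlt : 1 / (1 - q) < (4 * p * (c + p - 2 * p * q)) / (2 * S * (S - (1 - p))) := by
    rw [div_lt_div_iff₀ h1q hSL]
    nlinarith
  linarith
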